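/- arXiv:0705.3005 — 6 statements merged into one kernel-verified Lean document; each statement's English description precedes it below -/
import Mathlib

section
/- For all nonempty finite subsets F, F' of ℝ^d and any direction u, if the X-rays of F and F' in direction u are equal, then the centroids of F and F' lie on a common line parallel to u, i.e., centroid(F) - centroid(F') is a scalar multiple of u. -/
open scoped Classical

/-!
Two points lie on a common line parallel to `u` exactly when they have the same image in the
quotient `E ⧸ ℝ ∙ u`. Equal X-rays therefore say that `F` and `F'` have the same image in that
quotient counted with multiplicity. This forces `card F = card F'`, and, the quotient map being
linear, the two sums `∑ F` and `∑ F'` differ by an element of `ℝ ∙ u`; dividing by the common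
cardinality gives the claim.
-/

theorem Finset.map_val_eq_of_card_filter_eq {α β : Type*} [DecidableEq β] {f : α → β}
    {s t : Finset α} (h : ∀ z, (s.filter (f · = f z)).card = (t.filter (f · = f z)).card) :
    s.val.map f = t.val.map f := by
  ext b
  rw [Multiset.count_map, Multiset.count_map, ← Finset.filter_val, ← Finset.filter_val,
    Finset.card_val, Finset.card_val]
  by_cases hb : ∃ z, f z = b
  · obtain ⟨z, rfl⟩ := hb
    simpa only [eq_comm] using h z
  · rw [not_exists] at hb
    simp only [fun x => Ne.symm (hb x), Finset.filter_false]

theorem Submodule.exists_eq_add_smul_iff_mk_eq {R E : Type*} [Ring R] [AddCommGroup E]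
    [Module R E] (u z x : E) :
    (∃ t : R, x = z + t • u) ↔
      (Submodule.Quotient.mk x : E ⧸ R ∙ u) = Submodule.Quotient.mk z := by
  rw [Submodule.Quotient.eq, Submodule.mem_span_singleton]
  exact exists_congr fun t => eq_comm.trans eq_sub_iff_add_eq'.symm

theorem Finset.sum_sub_sum_mem_ker_of_map_val_eq {R M N : Type*} [Ring R] [AddCommGroup M]
    [AddCommGroup N] [Module R M] [Module R N] {f : M →ₗ[R] N} {s t : Finset M}
    (h : s.val.map f = t.val.map f) : ∑ x ∈ s, x - ∑ x ∈ t, x ∈ LinearMap.ker f := by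
  rw [LinearMap.mem_ker, map_sub, map_sum, map_sum, sub_eq_zero]
  exact congrArg Multiset.sum h

theorem xray_centroid_general (d : ℕ) (u : EuclideanSpace ℝ (Fin d))
    (F F' : Finset (EuclideanSpace ℝ (Fin d)))
    (h : ∀ z : EuclideanSpace ℝ (Fin d),
      (F.filter fun x => ∃ t : ℝ, x = z + t • u).card =
      (F'.filter fun x => ∃ t : ℝ, x = z + t • u).card) :
    ∃ c : ℝ,
      (F.card : ℝ)⁻¹ • (∑ x ∈ F, x) - (F'.card : ℝ)⁻¹ • (∑ x ∈ F', x) = c • u := by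
  have hmap : F.val.map (ℝ ∙ u).mkQ = F'.val.map (ℝ ∙ u).mkQ :=
    Finset.map_val_eq_of_card_filter_eq fun z => by
      -- `convert` also reconciles the classical decidability instances of the two filters
      convert h z using 3 <;> exact (Submodule.exists_eq_add_smul_iff_mk_eq (R := ℝ) u z _).symm
  have hcard : F.card = F'.card := by simpa using congrArg Multiset.card hmap
  have hsum := Finset.sum_sub_sum_mem_ker_of_map_val_eq hmap
  rw [Submodule.ker_mkQ] at hsum
  obtain ⟨c, hc⟩ := Submodule.mem_span_singleton.1 (Submodule.smul_mem _ (F.card : ℝ)⁻¹ hsum)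
  exact ⟨c, by rw [hc, smul_sub, hcard]⟩

/-- If two nonempty finite sets in `ℝ^d` have the same X-ray in direction `u`,
then their centroids lie on a common line parallel to `u`. -/
theorem xray_centroid (d : ℕ) (u : EuclideanSpace ℝ (Fin d)) (hu : ‖u‖ = 1)
    (F F' : Finset (EuclideanSpace ℝ (Fin d))) (hF : F.Nonempty) (hF' : F'.Nonempty)
    (h : ∀ z : EuclideanSpace ℝ (Fin d),
      (F.filter fun x => ∃ t : ℝ, x = z + t • u).card =
      (F'.filter fun x => ∃ t : ℝ, x = z + t • u).card) :
    ∃ c : ℝ,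
      (F.card : ℝ)⁻¹ • (∑ x ∈ F, x) - (F'.card : ℝ)⁻¹ • (∑ x ∈ F', x) = c • u :=
  xray_centroid_general d u F F' h
end

section
/- Let Λ ⊂ ℝ^d be any subset, let k ∈ ℕ, and let U be a set of k+1 pairwise non-parallel directions. If F, F' ⊆ Λ are finite subsets each of cardinality at most k and they have the same X-rays in all directions of U, then F = F'. Moreover, for every finite F ⊆ Λ of cardinality at most k, the grid G^F_U equals F. -/
open scoped Classical

/-- The grid of a finite set `F` with respect to a set of directions `U`. -/
noncomputable def grid (d : ℕ) (U : Finset (EuclideanSpace ℝ (Fin d)))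
    (F : Finset (EuclideanSpace ℝ (Fin d))) : Set (EuclideanSpace ℝ (Fin d)) :=
  ⋂ u ∈ U, ⋃ z ∈ F, {x | ∃ t : ℝ, x = z + t • u}

/-!
A point `x` outside a set `S` sees each point of `S` in at most one direction of `U`, since
the directions are pairwise non-parallel. So if every line through `x` in a direction of `U`
met `S`, then `S` would have at least `|U| = k + 1` points. Applied to a point of `F`, whose
lines in the directions of `U` also meet `F'` by equality of X-rays, this gives `F ⊆ F'`;
applied to a grid point it gives `G^F_U ⊆ F`.
-/

section Lines

variable {K V : Type*} [Field K] [AddCommGroup V] [Module K V] {U : Finset V}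

lemma eq_of_add_smul_eq_add_smul (hpar : ∀ u ∈ U, ∀ v ∈ U, u ≠ v → ¬∃ c : K, u = c • v)
    {u v : V} (hu : u ∈ U) (hv : v ∈ U) {x : V} {t s : K} (hne : x + t • u ≠ x)
    (h : x + t • u = x + s • v) : u = v := by
  by_contra huv
  have ht : t ≠ 0 := by
    rintro rfl
    simp at hne
  refine hpar u hu v hv huv ⟨t⁻¹ * s, ?_⟩
  rw [mul_smul, ← add_left_cancel h, smul_smul, inv_mul_cancel₀ ht, one_smul]

lemma card_le_of_forall_exists_add_smul_mem
    (hpar : ∀ u ∈ U, ∀ v ∈ U, u ≠ v → ¬∃ c : K, u = c • v)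
    {S : Finset V} {x : V} (hx : x ∉ S) (h : ∀ u ∈ U, ∃ y ∈ S, ∃ t : K, y = x + t • u) :
    U.card ≤ S.card := by
  choose! f hfS t hft using h
  refine Finset.card_le_card_of_injOn f hfS fun u hu v hv huv => ?_
  have hne : x + t u • u ≠ x := fun e => hx (by rw [← e, ← hft u hu]; exact hfS u hu)
  exact eq_of_add_smul_eq_add_smul hpar hu hv hne (by rw [← hft u hu, ← hft v hv, huv])

lemma mem_of_forall_exists_add_smul_mem
    (hpar : ∀ u ∈ U, ∀ v ∈ U, u ≠ v → ¬∃ c : K, u = c • v)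
    {S : Finset V} (hS : S.card < U.card) {x : V}
    (h : ∀ u ∈ U, ∃ y ∈ S, ∃ t : K, y = x + t • u) : x ∈ S := by
  by_contra hx
  exact (card_le_of_forall_exists_add_smul_mem hpar hx h).not_gt hS

lemma subset_of_xrays_eq (hpar : ∀ u ∈ U, ∀ v ∈ U, u ≠ v → ¬∃ c : K, u = c • v)
    {A B : Finset V} (hB : B.card < U.card)
    (hxray : ∀ u ∈ U, ∀ z : V,
      (A.filter fun x => ∃ t : K, x = z + t • u).card =
      (B.filter fun x => ∃ t : K, x = z + t • u).card) :
    A ⊆ B := by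
  intro a ha
  refine mem_of_forall_exists_add_smul_mem hpar hB fun u hu => ?_
  have hA : (A.filter fun x => ∃ t : K, x = a + t • u).Nonempty :=
    ⟨a, Finset.mem_filter.mpr ⟨ha, 0, by simp⟩⟩
  rw [← Finset.card_pos, hxray u hu a, Finset.card_pos] at hA
  obtain ⟨y, hy⟩ := hA
  exact ⟨y, (Finset.mem_filter.mp hy).1, (Finset.mem_filter.mp hy).2⟩

end Lines

lemma grid_eq_of_card_lt {d : ℕ} {U F : Finset (EuclideanSpace ℝ (Fin d))}
    (hpar : ∀ u ∈ U, ∀ v ∈ U, u ≠ v → ¬∃ c : ℝ, u = c • v) (hF : F.card < U.card) :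
    grid d U F = ↑F := by
  ext x
  simp only [grid, Set.mem_iInter, Set.mem_iUnion, Set.mem_ofPred_eq, Finset.mem_coe]
  refine ⟨fun hx => mem_of_forall_exists_add_smul_mem hpar hF fun u hu => ?_,
    fun hx u _ => ⟨x, hx, 0, by simp⟩⟩
  obtain ⟨z, hz, t, rfl⟩ := hx u hu
  exact ⟨z, hz, -t, by simp⟩

theorem determined_by_k_plus_one_xrays_general (d : ℕ)
    (Λ : Set (EuclideanSpace ℝ (Fin d))) (k : ℕ)
    (U : Finset (EuclideanSpace ℝ (Fin d))) (hcard : U.card = k + 1)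
    (hpar : ∀ u ∈ U, ∀ v ∈ U, u ≠ v → ¬∃ c : ℝ, u = c • v) :
    (∀ F F' : Finset (EuclideanSpace ℝ (Fin d)), ↑F ⊆ Λ → ↑F' ⊆ Λ →
      F.card ≤ k → F'.card ≤ k →
      (∀ u ∈ U, ∀ z : EuclideanSpace ℝ (Fin d),
        (F.filter fun x => ∃ t : ℝ, x = z + t • u).card =
        (F'.filter fun x => ∃ t : ℝ, x = z + t • u).card) →
      F = F') ∧
    (∀ F : Finset (EuclideanSpace ℝ (Fin d)), ↑F ⊆ Λ → F.card ≤ k →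
      grid d U F = ↑F) := by
  refine ⟨fun F F' _ _ hF hF' hxray => ?_, fun F _ hF => grid_eq_of_card_lt hpar (by omega)⟩
  exact (subset_of_xrays_eq hpar (by omega) hxray).antisymm
    (subset_of_xrays_eq hpar (by omega) fun u hu z => (hxray u hu z).symm)

/-- Finite subsets of `Λ` of cardinality at most `k` are determined by X-rays in
any `k+1` pairwise non-parallel directions; moreover the grid of such a set is
the set itself. -/
theorem determined_by_k_plus_one_xrays (d : ℕ) (hd : 2 ≤ d)
    (Λ : Set (EuclideanSpace ℝ (Fin d))) (k : ℕ)
    (U : Finset (EuclideanSpace ℝ (Fin d))) (hcard : U.card = k + 1)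
    (hU : ∀ u ∈ U, ‖u‖ = 1)
    (hpar : ∀ u ∈ U, ∀ v ∈ U, u ≠ v → ¬∃ c : ℝ, u = c • v) :
    (∀ F F' : Finset (EuclideanSpace ℝ (Fin d)), ↑F ⊆ Λ → ↑F' ⊆ Λ →
      F.card ≤ k → F'.card ≤ k →
      (∀ u ∈ U, ∀ z : EuclideanSpace ℝ (Fin d),
        (F.filter fun x => ∃ t : ℝ, x = z + t • u).card =
        (F'.filter fun x => ∃ t : ℝ, x = z + t • u).card) →
      F = F') ∧
    (∀ F : Finset (EuclideanSpace ℝ (Fin d)), ↑F ⊆ Λ → F.card ≤ k →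
      grid d U F = ↑F) :=
  determined_by_k_plus_one_xrays_general d Λ k U hcard hpar
end

section
/- The standard body-centred icosahedral module M_B = {(β,γ,δ)ᵗ : β,γ,δ ∈ ℤ[τ], τ²β + τγ + δ ≡ 0 (mod 2)} equals the ℤ[τ]-module generated by (2,0,0)ᵗ, (1,1,1)ᵗ, and (τ,0,1)ᵗ. -/
noncomputable def τ : ℝ := (1 + Real.sqrt 5) / 2

/-- The ring `ℤ[τ]` of integers of `ℚ(√5)`, as a subset of `ℝ`. -/
def Ztau : Set ℝ := {x | ∃ a b : ℤ, x = (a : ℝ) + (b : ℝ) * τ}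

/-- The standard body-centred icosahedral module
`M_B = {(β,γ,δ) : β,γ,δ ∈ ℤ[τ], τ²β + τγ + δ ≡ 0 (mod 2)}`. -/
def MB : Set (Fin 3 → ℝ) :=
  {v | (∀ i, v i ∈ Ztau) ∧ ∃ w ∈ Ztau, τ ^ 2 * v 0 + τ * v 1 + v 2 = 2 * w}

/-!
Writing `v = a (2,0,0) + b (1,1,1) + c (τ,0,1)` forces `b = v₁`, `c = v₂ - v₁` and
`2a = v₀ - v₁ - τ (v₂ - v₁)`, so the point is that this last quantity is divisible by `2`
exactly when `v ∈ M_B`. Using `τ² = τ + 1`, one computes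
`τ² (v₀ - v₁ - τ (v₂ - v₁)) = (τ² v₀ + τ v₁ + v₂) - 2 τ² v₂`, and `τ` is a unit of `ℤ[τ]`
with `τ⁻² = 2 - τ`. Conversely, for such a combination `τ² v₀ + τ v₁ + v₂ = 2 τ² (a + b + c)`.
-/

lemma tau_sq : τ ^ 2 = τ + 1 := by
  have h5 : Real.sqrt 5 ^ 2 = 5 := Real.sq_sqrt (by norm_num)
  unfold τ
  linear_combination h5 / 4

def ZtauSubring : Subring ℝ where
  carrier := Ztau
  mul_mem' := by
    rintro _ _ ⟨a, b, rfl⟩ ⟨c, d, rfl⟩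
    refine ⟨a * c + b * d, a * d + b * c + b * d, ?_⟩
    push_cast
    linear_combination (b * d : ℝ) * tau_sq
  one_mem' := ⟨1, 0, by simp⟩
  add_mem' := by
    rintro _ _ ⟨a, b, rfl⟩ ⟨c, d, rfl⟩
    exact ⟨a + c, b + d, by push_cast; ring⟩
  zero_mem' := ⟨0, 0, by simp⟩
  neg_mem' := by
    rintro _ ⟨a, b, rfl⟩
    exact ⟨-a, -b, by push_cast; ring⟩

lemma mem_ZtauSubring {x : ℝ} : x ∈ ZtauSubring ↔ x ∈ Ztau := Iff.rfl

lemma tau_mem_ZtauSubring : τ ∈ ZtauSubring := ⟨0, 1, by simp⟩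

lemma smul_add_smul_add_smul_eq {R : Type*} [CommSemiring R] (t a b c : R) :
    a • (![2, 0, 0] : Fin 3 → R) + b • ![1, 1, 1] + c • ![t, 0, 1] =
      ![2 * a + b + c * t, b, b + c] := by
  ext i
  fin_cases i <;> simp [mul_comm]

def generatorSpan : Set (Fin 3 → ℝ) :=
  {v | ∃ a ∈ Ztau, ∃ b ∈ Ztau, ∃ c ∈ Ztau,
    v = a • (![2, 0, 0] : Fin 3 → ℝ) + b • ![1, 1, 1] + c • ![τ, 0, 1]}

lemma generatorSpan_subset_MB : generatorSpan ⊆ MB := by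
  rintro _ ⟨a, ha, b, hb, c, hc, rfl⟩
  rw [← mem_ZtauSubring] at ha hb hc
  have hτ := tau_mem_ZtauSubring
  rw [smul_add_smul_add_smul_eq]
  refine ⟨fun i => ?_, τ ^ 2 * (a + b + c), ?_, ?_⟩
  · fin_cases i
    · exact add_mem (add_mem (mul_mem (ofNat_mem _ 2) ha) hb) (mul_mem hc hτ)
    · exact hb
    · exact add_mem hb hc
  · exact mul_mem (pow_mem hτ 2) (add_mem (add_mem ha hb) hc)
  · show τ ^ 2 * (2 * a + b + c * τ) + τ * b + (b + c) = 2 * (τ ^ 2 * (a + b + c))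
    linear_combination (τ * c - b - c) * tau_sq

lemma MB_subset_generatorSpan : MB ⊆ generatorSpan := by
  rintro v ⟨hv, w, hw, hrel⟩
  simp only [← mem_ZtauSubring] at hv hw
  have hτ := tau_mem_ZtauSubring
  refine ⟨(2 - τ) * w - v 2, sub_mem (mul_mem (sub_mem (ofNat_mem _ 2) hτ) hw) (hv 2),
    v 1, hv 1, v 2 - v 1, sub_mem (hv 2) (hv 1), ?_⟩
  rw [smul_add_smul_add_smul_eq]
  ext i
  fin_cases i
  · show v 0 = 2 * ((2 - τ) * w - v 2) + v 1 + (v 2 - v 1) * τ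
    linear_combination (2 - τ) * hrel + ((τ - 1) * v 0 + v 1) * tau_sq
  · rfl
  · show v 2 = v 1 + (v 2 - v 1)
    ring

/-- `M_B` equals the `ℤ[τ]`-module generated by `(2,0,0)`, `(1,1,1)` and `(τ,0,1)`. -/
theorem MB_eq_span :
    MB = {v | ∃ a ∈ Ztau, ∃ b ∈ Ztau, ∃ c ∈ Ztau,
      v = a • (![2, 0, 0] : Fin 3 → ℝ) + b • ![1, 1, 1] + c • ![τ, 0, 1]} :=
  MB_subset_generatorSpan.antisymm generatorSpan_subset_MB
end

section
/- The intersection of M_B with the plane H orthogonal to (τ,0,1)ᵗ equals the ℤ[τ]-module generated by (0,2,0)ᵗ and (−1, −τ', τ)ᵗ. -/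
noncomputable def τ' : ℝ := 1 - τ

lemma tau_mul_tau' : τ * τ' = -1 := by
  rw [τ']; linear_combination -tau_sq

def Ztau.subring : Subring ℝ where
  carrier := Ztau
  one_mem' := ⟨1, 0, by simp⟩
  zero_mem' := ⟨0, 0, by simp⟩
  add_mem' := by
    rintro _ _ ⟨a, b, rfl⟩ ⟨c, d, rfl⟩
    exact ⟨a + c, b + d, by push_cast; ring⟩
  neg_mem' := by
    rintro _ ⟨a, b, rfl⟩
    exact ⟨-a, -b, by push_cast; ring⟩
  mul_mem' := by
    rintro _ _ ⟨a, b, rfl⟩ ⟨c, d, rfl⟩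
    refine ⟨a * c + b * d, a * d + b * c + b * d, ?_⟩
    push_cast
    linear_combination (b * d : ℝ) * tau_sq

lemma tau_mem_Ztau : τ ∈ Ztau := ⟨0, 1, by simp⟩

lemma tau'_mem_Ztau : τ' ∈ Ztau := ⟨1, -1, by rw [τ']; push_cast; ring⟩

lemma smul_add_smul_eq (a b : ℝ) :
    a • (![0, 2, 0] : Fin 3 → ℝ) + b • ![-1, -τ', τ] = ![-b, 2 * a - τ' * b, τ * b] := by
  funext i
  fin_cases i <;> simp <;> ring

lemma exists_Ztau_coords_of_mem_MB {v : Fin 3 → ℝ} (hv : v ∈ MB) (hplane : τ * v 0 + v 2 = 0) :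
    ∃ a ∈ Ztau, ∃ b ∈ Ztau, v = ![-b, 2 * a - τ' * b, τ * b] := by
  obtain ⟨hv, w, hw, hcong⟩ := hv
  have hv₂ : v 2 = τ * -v 0 := by linear_combination hplane
  have hv₀₁ : v 0 + τ * v 1 = 2 * w := by
    linear_combination hcong - hplane - v 0 * tau_sq
  have hv₁ : v 1 = 2 * (-τ' * w) - τ' * -v 0 := by
    linear_combination -τ' * hv₀₁ + v 1 * tau_mul_tau'
  let R := Ztau.subring
  refine ⟨-τ' * w, R.mul_mem (R.neg_mem tau'_mem_Ztau) hw, -v 0, R.neg_mem (hv 0), ?_⟩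
  funext i
  fin_cases i
  exacts [(neg_neg _).symm, hv₁, hv₂]

lemma mem_MB_of_Ztau_coords {a b : ℝ} (ha : a ∈ Ztau) (hb : b ∈ Ztau) :
    ![-b, 2 * a - τ' * b, τ * b] ∈ MB := by
  let R := Ztau.subring
  refine ⟨fun i => ?_, τ * a, R.mul_mem tau_mem_Ztau ha, ?_⟩
  · fin_cases i
    · exact R.neg_mem hb
    · exact R.sub_mem (R.mul_mem (natCast_mem R 2) ha) (R.mul_mem tau'_mem_Ztau hb)
    · exact R.mul_mem tau_mem_Ztau hb
  · show τ ^ 2 * -b + τ * (2 * a - τ' * b) + τ * b = 2 * (τ * a)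
    linear_combination -b * tau_sq - b * tau_mul_tau'

/-- The intersection of `M_B` with the plane orthogonal to `(τ,0,1)` equals the
`ℤ[τ]`-module generated by `(0,2,0)` and `(−1,−τ',τ)`. -/
theorem MB_inter_plane :
    {v | v ∈ MB ∧ τ * v 0 + 0 * v 1 + 1 * v 2 = 0} =
    {v | ∃ a ∈ Ztau, ∃ b ∈ Ztau,
      v = a • (![0, 2, 0] : Fin 3 → ℝ) + b • ![-1, -τ', τ]} := by
  ext v
  simp only [smul_add_smul_eq]
  constructor
  · rintro ⟨hv, hplane⟩
    exact exists_Ztau_coords_of_mem_MB hv (by linear_combination hplane)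
  · rintro ⟨a, ha, b, hb, rfl⟩
    refine ⟨mem_MB_of_Ztau_coords ha hb, ?_⟩
    simp only [Matrix.cons_val]
    ring
end

section
/- For all r, s ∈ ℝ, ‖r(0,1,0)ᵗ + s·(1/2)(−1,−τ,τ')ᵗ‖ = |r + s ζ₅³| = √(r² + s² − r s τ), where the norm is the Euclidean norm in ℝ³. -/
noncomputable def ζ₅ : ℂ := Complex.exp (2 * Real.pi * Complex.I / 5)

/-!
Both sides are norms `‖r • x + s • y‖` of combinations of two unit vectors `x, y` in a real
inner product space, and such a norm only depends on `⟪x, y⟫`. For `x = (0,1,0)`,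
`y = ½(−1,−τ,τ')` one has `⟪x, y⟫ = −τ/2` (using `τ² + τ'² = 3`), and for `x = 1`, `y = ζ₅³`
one has `⟪x, y⟫ = cos (6π/5) = −cos (π/5) = −τ/2`.
-/

open Real

theorem norm_smul_add_smul_of_norm_eq_one {E : Type*} [NormedAddCommGroup E]
    [InnerProductSpace ℝ E] {x y : E} (hx : ‖x‖ = 1) (hy : ‖y‖ = 1) (r s : ℝ) :
    ‖r • x + s • y‖ = √(r ^ 2 + s ^ 2 + 2 * r * s * inner ℝ x y) := by
  rw [← sqrt_sq (norm_nonneg _), norm_add_sq_real, norm_smul, norm_smul, hx, hy,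
    real_inner_smul_left, real_inner_smul_right, norm_eq_abs, norm_eq_abs, mul_one, mul_one,
    sq_abs, sq_abs]
  congr 1; ring

theorem τ_sq_add_τ'_sq : τ ^ 2 + τ' ^ 2 = 3 := by
  have hτ : τ = goldenRatio := rfl
  rw [τ', hτ, one_sub_goldenConj, goldenRatio_sq, goldenConj_sq]
  linarith [goldenRatio_add_goldenConj]

theorem cos_six_pi_div_five : cos (6 * π / 5) = -τ / 2 := by
  rw [show 6 * π / 5 = π / 5 + π by ring, cos_add_pi, cos_pi_div_five, τ]
  ring

theorem ζ₅_pow_three_eq_exp : ζ₅ ^ 3 = Complex.exp (↑(6 * π / 5) * Complex.I) := by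
  rw [ζ₅, ← Complex.exp_nat_mul]
  push_cast
  congr 1; ring

theorem norm_ζ₅_pow_three : ‖ζ₅ ^ 3‖ = 1 := by
  rw [ζ₅_pow_three_eq_exp, Complex.norm_exp_ofReal_mul_I]

theorem inner_one_ζ₅_pow_three : inner ℝ (1 : ℂ) (ζ₅ ^ 3) = -τ / 2 := by
  rw [Complex.inner, map_one, mul_one, ζ₅_pow_three_eq_exp, Complex.exp_ofReal_mul_I_re,
    cos_six_pi_div_five]

theorem norm_vec_zero_one_zero : ‖(WithLp.equiv 2 (Fin 3 → ℝ)).symm ![0, 1, 0]‖ = 1 := by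
  simp [EuclideanSpace.norm_eq, Fin.sum_univ_three]

theorem norm_half_vec_neg_one_neg_τ_τ' :
    ‖(WithLp.equiv 2 (Fin 3 → ℝ)).symm ((1 / 2 : ℝ) • ![-1, -τ, τ'])‖ = 1 := by
  rw [EuclideanSpace.norm_eq, sqrt_eq_one, Fin.sum_univ_three]
  simp only [WithLp.equiv_symm_apply, Matrix.smul_cons, Matrix.smul_empty, smul_eq_mul,
    norm_eq_abs, sq_abs, Matrix.cons_val]
  linear_combination τ_sq_add_τ'_sq / 4

theorem inner_vec_zero_one_zero_half_vec_neg_one_neg_τ_τ' :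
    inner ℝ ((WithLp.equiv 2 (Fin 3 → ℝ)).symm ![0, 1, 0])
      ((WithLp.equiv 2 (Fin 3 → ℝ)).symm ((1 / 2 : ℝ) • ![-1, -τ, τ'])) = -τ / 2 := by
  simp only [WithLp.equiv_symm_apply, Matrix.smul_cons, Matrix.smul_empty, smul_eq_mul,
    EuclideanSpace.inner_eq_star_dotProduct, star_trivial, Matrix.dotProduct_cons,
    Matrix.dotProduct_of_isEmpty, Matrix.head_cons, Matrix.tail_cons]
  ring

/-- For all `r, s ∈ ℝ`,
`‖r(0,1,0) + s(1/2)(−1,−τ,τ')‖ = |r + s ζ₅³| = √(r² + s² − rsτ)`,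
the norm being the Euclidean norm on `ℝ³`. -/
theorem Phi_star_isometry (r s : ℝ) :
    ‖r • (WithLp.equiv 2 (Fin 3 → ℝ)).symm ![0, 1, 0] +
      s • (WithLp.equiv 2 (Fin 3 → ℝ)).symm ((1 / 2 : ℝ) • ![-1, -τ, τ'])‖ =
      ‖(r : ℂ) + (s : ℂ) * ζ₅ ^ 3‖ ∧
    ‖(r : ℂ) + (s : ℂ) * ζ₅ ^ 3‖ = Real.sqrt (r ^ 2 + s ^ 2 - r * s * τ) := by
  have hℂ : ‖(r : ℂ) + (s : ℂ) * ζ₅ ^ 3‖ = √(r ^ 2 + s ^ 2 - r * s * τ) := by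
    rw [← mul_one (r : ℂ), ← Complex.real_smul, ← Complex.real_smul,
      norm_smul_add_smul_of_norm_eq_one norm_one norm_ζ₅_pow_three, inner_one_ζ₅_pow_three]
    congr 1; ring
  refine ⟨?_, hℂ⟩
  rw [hℂ, norm_smul_add_smul_of_norm_eq_one norm_vec_zero_one_zero
    norm_half_vec_neg_one_neg_τ_τ', inner_vec_zero_one_zero_half_vec_neg_one_neg_τ_τ']
  congr 1; ring
end

section
/- Let Λ ⊂ ℝ³ be a set such that for every finite subset F of a module L ⊇ Λ − Λ there is a homothety mapping F into Λ (as holds for icosahedral model sets with underlying module L). Then a direction u ∈ S² is a Λ-direction (parallel to a nonzero element of Λ − Λ) if and only if u is an L-direction (parallel to a nonzero element of L). -/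
open scoped Classical

section Homothety

variable {E : Type*} [AddCommGroup E] [Module ℝ E]

/-- Mapping `{0, z}` into `Λ` by a homothety `x ↦ λx + t` realises `λz` as a difference of
points of `Λ`. -/
theorem exists_sub_eq_pos_smul_of_homothety {Λ L : Set E} (hzero : (0 : E) ∈ L)
    (hhom : ∀ F : Finset E, ↑F ⊆ L → ∃ lam : ℝ, 0 < lam ∧ ∃ t : E, ∀ x ∈ F, lam • x + t ∈ Λ)
    {z : E} (hz : z ∈ L) :
    ∃ x ∈ Λ, ∃ y ∈ Λ, ∃ lam : ℝ, 0 < lam ∧ x - y = lam • z := by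
  have hF : (↑({0, z} : Finset E) : Set E) ⊆ L := by
    simpa [Set.insert_subset_iff] using ⟨hzero, hz⟩
  obtain ⟨lam, hlam, t, ht⟩ := hhom {0, z} hF
  have h0 : t ∈ Λ := by simpa using ht 0 (by simp)
  exact ⟨lam • z + t, ht z (by simp), t, h0, lam, hlam, add_sub_cancel_right _ _⟩

end Homothety

theorem Lambda_directions_eq_L_directions_general
    (Λ L : Set (EuclideanSpace ℝ (Fin 3)))
    (hdiff : ∀ x ∈ Λ, ∀ y ∈ Λ, x - y ∈ L)
    (hzero : (0 : EuclideanSpace ℝ (Fin 3)) ∈ L)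
    (hhom : ∀ F : Finset (EuclideanSpace ℝ (Fin 3)), ↑F ⊆ L →
      ∃ lam : ℝ, 0 < lam ∧ ∃ t : EuclideanSpace ℝ (Fin 3),
        ∀ x ∈ F, lam • x + t ∈ Λ)
    (u : EuclideanSpace ℝ (Fin 3)) :
    (∃ x ∈ Λ, ∃ y ∈ Λ, x - y ≠ 0 ∧ ∃ c : ℝ, x - y = c • u) ↔
    (∃ z ∈ L, z ≠ 0 ∧ ∃ c : ℝ, z = c • u) := by
  constructor
  · rintro ⟨x, hx, y, hy, hne, c, hc⟩
    exact ⟨x - y, hdiff x hx y hy, hne, c, hc⟩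
  · rintro ⟨z, hz, hne, c, rfl⟩
    obtain ⟨x, hx, y, hy, lam, hlam, hxy⟩ :=
      exists_sub_eq_pos_smul_of_homothety hzero hhom hz
    exact ⟨x, hx, y, hy, hxy ▸ smul_ne_zero hlam.ne' hne, lam * c, by rw [hxy, smul_smul]⟩

/-- Let `Λ ⊆ ℝ³` with `Λ − Λ ⊆ L`, `0 ∈ L`, `L` closed under differences, and
suppose every finite subset of `L` can be mapped into `Λ` by a homothety
`x ↦ λx + t` with `λ > 0` (as holds for icosahedral model sets with underlying
module `L`). Then a direction `u ∈ S²` is a `Λ`-direction iff it is an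
`L`-direction. -/
theorem Lambda_directions_eq_L_directions
    (Λ L : Set (EuclideanSpace ℝ (Fin 3)))
    (hdiff : ∀ x ∈ Λ, ∀ y ∈ Λ, x - y ∈ L)
    (hzero : (0 : EuclideanSpace ℝ (Fin 3)) ∈ L)
    (hsub : ∀ x ∈ L, ∀ y ∈ L, x - y ∈ L)
    (hhom : ∀ F : Finset (EuclideanSpace ℝ (Fin 3)), ↑F ⊆ L →
      ∃ lam : ℝ, 0 < lam ∧ ∃ t : EuclideanSpace ℝ (Fin 3),
        ∀ x ∈ F, lam • x + t ∈ Λ)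
    (u : EuclideanSpace ℝ (Fin 3)) (hu : ‖u‖ = 1) :
    (∃ x ∈ Λ, ∃ y ∈ Λ, x - y ≠ 0 ∧ ∃ c : ℝ, x - y = c • u) ↔
    (∃ z ∈ L, z ≠ 0 ∧ ∃ c : ℝ, z = c • u) :=
  Lambda_directions_eq_L_directions_general Λ L hdiff hzero hhom u
end
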